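/- arXiv:1608.08391 — 2 statements merged into one kernel-verified Lean document; each statement's English description precedes it below -/
import Mathlib

section
/- Let n ≥ 1 and 1 ≤ α, β ≤ n. Let p, q ∈ ℂⁿ be linearly independent and define P, Q : ℂ^{n×n} → ℂ by P(z) = Σ_j p_j z_{jα} and Q(z) = Σ_k q_k z_{kβ}. Let f = P/Q on the open subset W_Q = {z ∈ U(n) : Q(z) ≠ 0} of U(n). Then f is proper biharmonic (i.e. τ²(f) vanishes identically on W_Q but τ(f) does not vanish identically on W_Q) if and only if α ≠ β. -/
open Matrix

noncomputable section

/-- The matrix unit `E_{rs}` in `ℂ^{n×n}`. -/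
def matE (n : ℕ) (r s : Fin n) : Matrix (Fin n) (Fin n) ℂ :=
  Matrix.single r s 1

/-- `Y_{rs} = (E_{rs} − E_{sr})/√2`. -/
def matY (n : ℕ) (r s : Fin n) : Matrix (Fin n) (Fin n) ℂ :=
  ((Real.sqrt 2 : ℂ))⁻¹ • (matE n r s - matE n s r)

/-- `X_{rs} = (E_{rs} + E_{sr})/√2`. -/
def matX (n : ℕ) (r s : Fin n) : Matrix (Fin n) (Fin n) ℂ :=
  ((Real.sqrt 2 : ℂ))⁻¹ • (matE n r s + matE n s r)

/-- `Z(f)(p) = (d/ds)|₀ f(p·exp(sZ))`: derivative of `f` at `p` along the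
left-invariant vector field determined by `Z`. -/
def lieD1 {n : ℕ} (f : Matrix (Fin n) (Fin n) ℂ → ℂ)
    (p Z : Matrix (Fin n) (Fin n) ℂ) : ℂ :=
  deriv (fun s : ℝ => f (p * NormedSpace.exp ((s : ℂ) • Z))) 0

/-- `Z²(f)(p) = (d²/ds²)|₀ f(p·exp(sZ))`. -/
def lieD2 {n : ℕ} (f : Matrix (Fin n) (Fin n) ℂ → ℂ)
    (p Z : Matrix (Fin n) (Fin n) ℂ) : ℂ :=
  deriv (deriv (fun s : ℝ => f (p * NormedSpace.exp ((s : ℂ) • Z)))) 0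

/-- The Laplace–Beltrami operator (tension field) on `U(n)`:
`τ(f)(p) = Σ_{Z ∈ B} Z²(f)(p)` for the standard orthonormal basis
`B = {Y_{rs}, iX_{rs} : r < s} ∪ {iE_{tt}}` of `u(n)`. -/
def tauU (n : ℕ) (f : Matrix (Fin n) (Fin n) ℂ → ℂ)
    (p : Matrix (Fin n) (Fin n) ℂ) : ℂ :=
  (∑ r : Fin n, ∑ s : Fin n, if r < s then
      lieD2 f p (matY n r s) + lieD2 f p (Complex.I • matX n r s) else 0)
  + ∑ t : Fin n, lieD2 f p (Complex.I • matE n t t)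

/-- The conformality operator on `U(n)`:
`κ(f,h)(p) = Σ_{Z ∈ B} Z(f)(p)·Z(h)(p)`. -/
def kappaU (n : ℕ) (f h : Matrix (Fin n) (Fin n) ℂ → ℂ)
    (p : Matrix (Fin n) (Fin n) ℂ) : ℂ :=
  (∑ r : Fin n, ∑ s : Fin n, if r < s then
      lieD1 f p (matY n r s) * lieD1 h p (matY n r s)
        + lieD1 f p (Complex.I • matX n r s) * lieD1 h p (Complex.I • matX n r s) else 0)
  + ∑ t : Fin n, lieD1 f p (Complex.I • matE n t t) * lieD1 h p (Complex.I • matE n t t)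

/-!
The tension field `τ` is a second-order operator whose carré du champ is the conformality
operator `κ`: `τ(FG) = τF·G + 2κ(F,G) + F·τG`, and similarly for quotients. On the coordinate
forms `L_{uγ}(z) = Σ_j u_j z_{jγ}` everything is explicit, because
`Σ_{Z ∈ B} Z ⊗ Z = -Σ_{r,s} E_{rs} ⊗ E_{sr}`: `τ L_{uγ} = -n L_{uγ}` and
`κ(L_{uγ}, L_{vδ}) = -L_{uδ} L_{vγ}`. Hence `τ(P/Q) = 2N/Q²` for the `2 × 2` minor
`N = L_{pβ} L_{qα} - L_{pα} L_{qβ}`, and since `τN = -2(n-1)N` and `κ(N,Q) = -QN` one gets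
`τ(N/Q²) = 0`. For `α = β` the minor vanishes identically; for `α ≠ β` a permutation matrix
moving columns `α, β` to coordinates `j, k` with `p_k q_j ≠ p_j q_k` is a point of `W_Q` where
`τ(P/Q) ≠ 0`.
-/

open Filter Topology

theorem Finset.sum_ite_lt_add_sum_diag {ι M : Type*} [Fintype ι] [LinearOrder ι]
    [AddCommMonoid M] (g : ι → ι → M) :
    (∑ r, ∑ s, if r < s then g r s + g s r else 0) + ∑ t, g t t = ∑ r, ∑ s, g r s := by
  have hsplit : ∀ r s, g r s =
      ((if r < s then g r s else 0) + if s < r then g r s else 0) + if r = s then g r s else 0 := by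
    intro r s
    rcases lt_trichotomy r s with h | rfl | h
    · simp [h, h.not_gt, h.ne]
    · simp
    · simp [h, h.not_gt, h.ne']
  have hswap : ∑ r, ∑ s, (if r < s then g s r else 0) = ∑ r, ∑ s, if s < r then g r s else 0 :=
    Finset.sum_comm
  rw [Finset.sum_congr rfl fun r _ => Finset.sum_congr rfl fun s _ => hsplit r s]
  simp only [ite_add_zero, Finset.sum_add_distrib, hswap, Finset.sum_ite_eq, Finset.mem_univ,
    if_true]

theorem Equiv.Perm.exists_apply_eq_pair {ι : Type*} {a b c d : ι} (hab : a ≠ b) (hcd : c ≠ d) :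
    ∃ σ : Equiv.Perm ι, σ a = c ∧ σ b = d := by
  have hinj : ∀ {x y : ι}, x ≠ y → Function.Injective ![x, y] := fun hxy i j => by
    fin_cases i <;> fin_cases j <;> simp [hxy, hxy.symm]
  obtain ⟨σ, hσ⟩ := Equiv.Perm.exists_extending_pair _ _ (hinj hab) (hinj hcd)
  exact ⟨σ, hσ 0, hσ 1⟩

theorem Matrix.permMatrix_mem_unitaryGroup {ι R : Type*} [Fintype ι] [DecidableEq ι] [CommRing R]
    [StarRing R] (σ : Equiv.Perm ι) : σ.permMatrix R ∈ Matrix.unitaryGroup ι R := by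
  rw [Matrix.mem_unitaryGroup_iff, Matrix.star_eq_conjTranspose, Matrix.conjTranspose_permMatrix,
    ← Matrix.permMatrix_mul, inv_mul_cancel, Matrix.permMatrix_one]

section TwiceDifferentiable

variable {𝕜 𝕜' : Type*} [NontriviallyNormedField 𝕜] [NontriviallyNormedField 𝕜']
  [NormedAlgebra 𝕜 𝕜'] {f g : 𝕜 → 𝕜'} {x : 𝕜}

/-- Weaker than `ContDiffAt 𝕜 2 f x`, but exactly what the product and quotient rules for
`deriv (deriv _) x` need. -/
def TwiceDifferentiableAt (f : 𝕜 → 𝕜') (x : 𝕜) : Prop :=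
  (∀ᶠ y in 𝓝 x, DifferentiableAt 𝕜 f y) ∧ DifferentiableAt 𝕜 (deriv f) x

namespace TwiceDifferentiableAt

theorem differentiableAt (hf : TwiceDifferentiableAt f x) : DifferentiableAt 𝕜 f x :=
  hf.1.self_of_nhds

theorem of_deriv_eventuallyEq {f' : 𝕜 → 𝕜'} (hf : ∀ᶠ y in 𝓝 x, HasDerivAt f (f' y) y)
    (hf' : DifferentiableAt 𝕜 f' x) : TwiceDifferentiableAt f x :=
  ⟨hf.mono fun _ hy => hy.differentiableAt,
    hf'.congr_of_eventuallyEq (hf.mono fun _ hy => hy.deriv)⟩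

theorem sub (hf : TwiceDifferentiableAt f x) (hg : TwiceDifferentiableAt g x) :
    TwiceDifferentiableAt (fun y => f y - g y) x :=
  of_deriv_eventuallyEq ((hf.1.and hg.1).mono fun _ hy => hy.1.hasDerivAt.sub hy.2.hasDerivAt)
    (hf.2.sub hg.2)

theorem mul (hf : TwiceDifferentiableAt f x) (hg : TwiceDifferentiableAt g x) :
    TwiceDifferentiableAt (fun y => f y * g y) x :=
  of_deriv_eventuallyEq ((hf.1.and hg.1).mono fun _ hy => hy.1.hasDerivAt.mul hy.2.hasDerivAt)
    ((hf.2.mul hg.differentiableAt).add (hf.differentiableAt.mul hg.2))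

theorem eventually_ne (hf : TwiceDifferentiableAt f x) (hx : f x ≠ 0) : ∀ᶠ y in 𝓝 x, f y ≠ 0 :=
  hf.differentiableAt.continuousAt.eventually_ne hx

theorem inv (hf : TwiceDifferentiableAt f x) (hx : f x ≠ 0) :
    TwiceDifferentiableAt (fun y => (f y)⁻¹) x :=
  of_deriv_eventuallyEq ((hf.1.and (hf.eventually_ne hx)).mono fun _ hy =>
      hy.1.hasDerivAt.fun_inv hy.2)
    ((hf.2.neg).div (hf.differentiableAt.pow 2) (pow_ne_zero 2 hx))

theorem deriv_deriv_sub (hf : TwiceDifferentiableAt f x) (hg : TwiceDifferentiableAt g x) :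
    deriv (deriv fun y => f y - g y) x = deriv (deriv f) x - deriv (deriv g) x := by
  rw [EventuallyEq.deriv_eq ((hf.1.and hg.1).mono fun _ hy =>
    (hy.1.hasDerivAt.fun_sub hy.2.hasDerivAt).deriv)]
  exact deriv_sub hf.2 hg.2

theorem deriv_deriv_mul (hf : TwiceDifferentiableAt f x) (hg : TwiceDifferentiableAt g x) :
    deriv (deriv fun y => f y * g y) x =
      deriv (deriv f) x * g x + 2 * (deriv f x * deriv g x) + f x * deriv (deriv g) x := by
  rw [EventuallyEq.deriv_eq ((hf.1.and hg.1).mono fun _ hy =>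
    (hy.1.hasDerivAt.fun_mul hy.2.hasDerivAt).deriv)]
  rw [((hf.2.hasDerivAt.fun_mul hg.differentiableAt.hasDerivAt).fun_add
    (hf.differentiableAt.hasDerivAt.fun_mul hg.2.hasDerivAt)).deriv]
  ring

theorem deriv_deriv_inv (hf : TwiceDifferentiableAt f x) (hx : f x ≠ 0) :
    deriv (deriv fun y => (f y)⁻¹) x =
      -deriv (deriv f) x / f x ^ 2 + 2 * deriv f x ^ 2 / f x ^ 3 := by
  rw [EventuallyEq.deriv_eq ((hf.1.and (hf.eventually_ne hx)).mono fun _ hy =>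
    (hy.1.hasDerivAt.fun_inv hy.2).deriv)]
  rw [(hf.2.hasDerivAt.fun_neg.fun_div (hf.differentiableAt.hasDerivAt.fun_pow 2)
    (pow_ne_zero 2 hx)).deriv]
  field_simp
  ring

end TwiceDifferentiableAt

end TwiceDifferentiable

section LieDerivative

attribute [local instance] Matrix.linftyOpNormedRing Matrix.linftyOpNormedAlgebra

variable {n : ℕ}

def lieCurve (F : Matrix (Fin n) (Fin n) ℂ → ℂ) (p Z : Matrix (Fin n) (Fin n) ℂ) : ℝ → ℂ :=
  fun s => F (p * NormedSpace.exp ((s : ℂ) • Z))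

theorem lieCurve_zero (F : Matrix (Fin n) (Fin n) ℂ → ℂ) (p Z : Matrix (Fin n) (Fin n) ℂ) :
    lieCurve F p Z 0 = F p := by
  simp [lieCurve, NormedSpace.exp_zero]

theorem tendsto_mul_exp_smul_nhds_zero (p Z : Matrix (Fin n) (Fin n) ℂ) :
    Tendsto (fun s : ℝ => p * NormedSpace.exp ((s : ℂ) • Z)) (𝓝 0) (𝓝 p) := by
  have hc : Continuous (fun s : ℝ => p * NormedSpace.exp ((s : ℂ) • Z)) := by fun_prop
  simpa [NormedSpace.exp_zero] using hc.tendsto 0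

theorem hasDerivAt_lieCurve_linearMap (ℓ : Matrix (Fin n) (Fin n) ℂ →ₗ[ℂ] ℂ)
    (p Z : Matrix (Fin n) (Fin n) ℂ) (s : ℝ) :
    HasDerivAt (lieCurve ℓ p Z) (lieCurve (ℓ ∘ₗ LinearMap.mulRight ℂ Z) p Z s) s := by
  have hexp := hasDerivAt_exp_smul_const (𝕂 := ℂ) Z (s : ℂ)
  convert ((ℓ ∘ₗ LinearMap.mulLeft ℂ p).toContinuousLinearMap.hasFDerivAt.comp_hasDerivAt
      (s : ℂ) hexp).comp_ofReal using 1
  · rfl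
  · simp only [lieCurve, LinearMap.comp_apply, LinearMap.mulRight_apply, mul_assoc]
    rfl

theorem deriv_lieCurve_linearMap (ℓ : Matrix (Fin n) (Fin n) ℂ →ₗ[ℂ] ℂ)
    (p Z : Matrix (Fin n) (Fin n) ℂ) :
    deriv (lieCurve ℓ p Z) = lieCurve (ℓ ∘ₗ LinearMap.mulRight ℂ Z) p Z :=
  funext fun s => (hasDerivAt_lieCurve_linearMap ℓ p Z s).deriv

theorem lieD1_linearMap (ℓ : Matrix (Fin n) (Fin n) ℂ →ₗ[ℂ] ℂ)
    (p Z : Matrix (Fin n) (Fin n) ℂ) :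
    lieD1 ℓ p Z = ℓ (p * Z) := by
  simp only [lieD1, ← lieCurve.eq_def, deriv_lieCurve_linearMap, lieCurve_zero,
    LinearMap.comp_apply, LinearMap.mulRight_apply]

theorem lieD2_linearMap (ℓ : Matrix (Fin n) (Fin n) ℂ →ₗ[ℂ] ℂ)
    (p Z : Matrix (Fin n) (Fin n) ℂ) :
    lieD2 ℓ p Z = ℓ (p * Z * Z) := by
  simp only [lieD2, ← lieCurve.eq_def, deriv_lieCurve_linearMap, lieCurve_zero,
    LinearMap.comp_apply, LinearMap.mulRight_apply]

def LieTwiceDifferentiableAt (F : Matrix (Fin n) (Fin n) ℂ → ℂ) (p : Matrix (Fin n) (Fin n) ℂ) :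
    Prop :=
  ∀ Z, TwiceDifferentiableAt (lieCurve F p Z) 0

theorem lieTwiceDifferentiableAt_linearMap (ℓ : Matrix (Fin n) (Fin n) ℂ →ₗ[ℂ] ℂ)
    (p : Matrix (Fin n) (Fin n) ℂ) : LieTwiceDifferentiableAt ℓ p := fun Z =>
  .of_deriv_eventuallyEq (.of_forall (hasDerivAt_lieCurve_linearMap ℓ p Z))
    (hasDerivAt_lieCurve_linearMap _ p Z 0).differentiableAt

end LieDerivative

section LieRules

variable {n : ℕ} {F G : Matrix (Fin n) (Fin n) ℂ → ℂ} {p : Matrix (Fin n) (Fin n) ℂ}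

namespace LieTwiceDifferentiableAt

theorem sub (hF : LieTwiceDifferentiableAt F p) (hG : LieTwiceDifferentiableAt G p) :
    LieTwiceDifferentiableAt (fun w => F w - G w) p := fun Z => (hF Z).sub (hG Z)

theorem mul (hF : LieTwiceDifferentiableAt F p) (hG : LieTwiceDifferentiableAt G p) :
    LieTwiceDifferentiableAt (fun w => F w * G w) p := fun Z => (hF Z).mul (hG Z)

theorem inv (hG : LieTwiceDifferentiableAt G p) (hp : G p ≠ 0) :
    LieTwiceDifferentiableAt (fun w => (G w)⁻¹) p := fun Z =>
  (hG Z).inv (by rwa [lieCurve_zero])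

end LieTwiceDifferentiableAt

theorem lieD1_sub (hF : LieTwiceDifferentiableAt F p) (hG : LieTwiceDifferentiableAt G p)
    (Z : Matrix (Fin n) (Fin n) ℂ) :
    lieD1 (fun w => F w - G w) p Z = lieD1 F p Z - lieD1 G p Z :=
  ((hF Z).differentiableAt.hasDerivAt.fun_sub (hG Z).differentiableAt.hasDerivAt).deriv

theorem lieD2_sub (hF : LieTwiceDifferentiableAt F p) (hG : LieTwiceDifferentiableAt G p)
    (Z : Matrix (Fin n) (Fin n) ℂ) :
    lieD2 (fun w => F w - G w) p Z = lieD2 F p Z - lieD2 G p Z :=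
  (hF Z).deriv_deriv_sub (hG Z)

theorem lieD1_mul (hF : LieTwiceDifferentiableAt F p) (hG : LieTwiceDifferentiableAt G p)
    (Z : Matrix (Fin n) (Fin n) ℂ) :
    lieD1 (fun w => F w * G w) p Z = lieD1 F p Z * G p + F p * lieD1 G p Z := by
  have := ((hF Z).differentiableAt.hasDerivAt.fun_mul (hG Z).differentiableAt.hasDerivAt).deriv
  rwa [lieCurve_zero, lieCurve_zero] at this

theorem lieD2_mul (hF : LieTwiceDifferentiableAt F p) (hG : LieTwiceDifferentiableAt G p)
    (Z : Matrix (Fin n) (Fin n) ℂ) :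
    lieD2 (fun w => F w * G w) p Z =
      lieD2 F p Z * G p + 2 * (lieD1 F p Z * lieD1 G p Z) + F p * lieD2 G p Z := by
  have := (hF Z).deriv_deriv_mul (hG Z)
  rwa [lieCurve_zero, lieCurve_zero] at this

theorem lieD1_inv (hG : LieTwiceDifferentiableAt G p) (hp : G p ≠ 0)
    (Z : Matrix (Fin n) (Fin n) ℂ) :
    lieD1 (fun w => (G w)⁻¹) p Z = -lieD1 G p Z / G p ^ 2 := by
  rw [← lieCurve_zero G p Z] at hp ⊢
  exact ((hG Z).differentiableAt.hasDerivAt.fun_inv hp).deriv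

theorem lieD2_inv (hG : LieTwiceDifferentiableAt G p) (hp : G p ≠ 0)
    (Z : Matrix (Fin n) (Fin n) ℂ) :
    lieD2 (fun w => (G w)⁻¹) p Z = -lieD2 G p Z / G p ^ 2 + 2 * lieD1 G p Z ^ 2 / G p ^ 3 := by
  rw [← lieCurve_zero G p Z] at hp ⊢
  exact (hG Z).deriv_deriv_inv hp

theorem lieD2_const_mul (c : ℂ) (F : Matrix (Fin n) (Fin n) ℂ → ℂ)
    (p Z : Matrix (Fin n) (Fin n) ℂ) :
    lieD2 (fun w => c * F w) p Z = c * lieD2 F p Z := by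
  simp only [lieD2, deriv_const_mul_field']

end LieRules

section Basis

variable {n : ℕ}

/-- `F ↦ Σ_{Z ∈ B} F Z`, bundled as a linear functional so that `tauU` and `kappaU` inherit its
linearity. -/
def basisSum (n : ℕ) : (Matrix (Fin n) (Fin n) ℂ → ℂ) →ₗ[ℂ] ℂ :=
  (∑ r : Fin n, ∑ s : Fin n, if r < s then
      LinearMap.proj (R := ℂ) (φ := fun _ => ℂ) (matY n r s)
        + LinearMap.proj (R := ℂ) (φ := fun _ => ℂ) (Complex.I • matX n r s) else 0)
  + ∑ t : Fin n, LinearMap.proj (R := ℂ) (φ := fun _ => ℂ) (Complex.I • matE n t t)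

theorem basisSum_apply (F : Matrix (Fin n) (Fin n) ℂ → ℂ) :
    basisSum n F = (∑ r : Fin n, ∑ s : Fin n, if r < s then
      F (matY n r s) + F (Complex.I • matX n r s) else 0)
      + ∑ t : Fin n, F (Complex.I • matE n t t) := by
  simp [basisSum, apply_ite (fun f : (Matrix (Fin n) (Fin n) ℂ → ℂ) →ₗ[ℂ] ℂ => f F)]

theorem basisSum_add (A B : Matrix (Fin n) (Fin n) ℂ → ℂ) :
    basisSum n (fun Z => A Z + B Z) = basisSum n A + basisSum n B :=
  map_add _ A B

theorem basisSum_sub (A B : Matrix (Fin n) (Fin n) ℂ → ℂ) :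
    basisSum n (fun Z => A Z - B Z) = basisSum n A - basisSum n B :=
  map_sub _ A B

theorem basisSum_const_mul (c : ℂ) (A : Matrix (Fin n) (Fin n) ℂ → ℂ) :
    basisSum n (fun Z => c * A Z) = c * basisSum n A :=
  map_smul _ c A

theorem basisSum_bilinear (β : Matrix (Fin n) (Fin n) ℂ →ₗ[ℂ] Matrix (Fin n) (Fin n) ℂ →ₗ[ℂ] ℂ) :
    basisSum n (fun Z => β Z Z) = -∑ r, ∑ s, β (matE n r s) (matE n s r) := by
  have hsqrt : ((Real.sqrt 2 : ℂ))⁻¹ * ((Real.sqrt 2 : ℂ))⁻¹ = 1 / 2 := by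
    rw [← mul_inv, ← Complex.ofReal_mul, Real.mul_self_sqrt zero_le_two]
    norm_num
  have hoff : ∀ r s, β (matY n r s) (matY n r s)
      + β (Complex.I • matX n r s) (Complex.I • matX n r s)
      = -(β (matE n r s) (matE n s r) + β (matE n s r) (matE n r s)) := by
    intro r s
    simp only [matY, matX, map_smul, map_sub, map_add, LinearMap.smul_apply, LinearMap.sub_apply,
      LinearMap.add_apply, smul_eq_mul]
    linear_combination -2 * (β (matE n r s) (matE n s r) + β (matE n s r) (matE n r s)) * hsqrt
      + ((Real.sqrt 2 : ℂ))⁻¹ * ((Real.sqrt 2 : ℂ))⁻¹ * (β (matE n r s) (matE n r s)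
        + β (matE n r s) (matE n s r) + β (matE n s r) (matE n r s)
        + β (matE n s r) (matE n s r)) * Complex.I_mul_I
  have hdiag : ∀ t, β (Complex.I • matE n t t) (Complex.I • matE n t t)
      = -β (matE n t t) (matE n t t) := by
    intro t
    simp only [map_smul, LinearMap.smul_apply, smul_eq_mul]
    linear_combination β (matE n t t) (matE n t t) * Complex.I_mul_I
  rw [basisSum_apply, ← Finset.sum_ite_lt_add_sum_diag fun r s => β (matE n r s) (matE n s r)]
  simp only [hoff, hdiag, neg_add, Finset.sum_neg_distrib]
  congr 1
  simp only [← Finset.sum_neg_distrib]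
  refine Finset.sum_congr rfl fun r _ => Finset.sum_congr rfl fun s _ => ?_
  split_ifs <;> simp [add_comm]

theorem tauU_eq_basisSum (F : Matrix (Fin n) (Fin n) ℂ → ℂ) (p : Matrix (Fin n) (Fin n) ℂ) :
    tauU n F p = basisSum n (lieD2 F p) :=
  (basisSum_apply _).symm

theorem kappaU_eq_basisSum (F G : Matrix (Fin n) (Fin n) ℂ → ℂ) (p : Matrix (Fin n) (Fin n) ℂ) :
    kappaU n F G p = basisSum n (fun Z => lieD1 F p Z * lieD1 G p Z) := by
  rw [basisSum_apply, kappaU]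

end Basis

section TensionCalculus

variable {n : ℕ} {F G : Matrix (Fin n) (Fin n) ℂ → ℂ} {p : Matrix (Fin n) (Fin n) ℂ}

theorem Filter.EventuallyEq.tauU_eq (h : F =ᶠ[𝓝 p] G) : tauU n F p = tauU n G p := by
  have hD2 : lieD2 F p = lieD2 G p := funext fun Z => by
    have hcurve : lieCurve F p Z =ᶠ[𝓝 0] lieCurve G p Z :=
      (tendsto_mul_exp_smul_nhds_zero p Z).eventually h
    exact hcurve.deriv.deriv_eq
  rw [tauU_eq_basisSum, tauU_eq_basisSum, hD2]

theorem kappaU_comm (F G : Matrix (Fin n) (Fin n) ℂ → ℂ) (p : Matrix (Fin n) (Fin n) ℂ) :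
    kappaU n F G p = kappaU n G F p := by
  simp only [kappaU_eq_basisSum, mul_comm]

theorem tauU_const_mul (c : ℂ) (F : Matrix (Fin n) (Fin n) ℂ → ℂ)
    (p : Matrix (Fin n) (Fin n) ℂ) :
    tauU n (fun w => c * F w) p = c * tauU n F p := by
  rw [tauU_eq_basisSum, funext (lieD2_const_mul c F p), basisSum_const_mul, tauU_eq_basisSum]

theorem tauU_sub (hF : LieTwiceDifferentiableAt F p) (hG : LieTwiceDifferentiableAt G p) :
    tauU n (fun w => F w - G w) p = tauU n F p - tauU n G p := by
  rw [tauU_eq_basisSum, funext (lieD2_sub hF hG), basisSum_sub, tauU_eq_basisSum,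
    tauU_eq_basisSum]

theorem tauU_mul (hF : LieTwiceDifferentiableAt F p) (hG : LieTwiceDifferentiableAt G p) :
    tauU n (fun w => F w * G w) p =
      tauU n F p * G p + 2 * kappaU n F G p + F p * tauU n G p := by
  have h : lieD2 (fun w => F w * G w) p = fun Z =>
      G p * lieD2 F p Z + 2 * (lieD1 F p Z * lieD1 G p Z) + F p * lieD2 G p Z :=
    funext fun Z => by rw [lieD2_mul hF hG]; ring
  rw [tauU_eq_basisSum, h, basisSum_add, basisSum_add, basisSum_const_mul, basisSum_const_mul,
    basisSum_const_mul, tauU_eq_basisSum, tauU_eq_basisSum, kappaU_eq_basisSum]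
  ring

theorem tauU_inv (hG : LieTwiceDifferentiableAt G p) (hp : G p ≠ 0) :
    tauU n (fun w => (G w)⁻¹) p = -tauU n G p / G p ^ 2 + 2 * kappaU n G G p / G p ^ 3 := by
  have h : lieD2 (fun w => (G w)⁻¹) p = fun Z =>
      (-(G p ^ 2)⁻¹) * lieD2 G p Z + 2 * (G p ^ 3)⁻¹ * (lieD1 G p Z * lieD1 G p Z) :=
    funext fun Z => by rw [lieD2_inv hG hp]; ring
  rw [tauU_eq_basisSum, h, basisSum_add, basisSum_const_mul, basisSum_const_mul,
    tauU_eq_basisSum, kappaU_eq_basisSum]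
  ring

theorem kappaU_sub_left (hF : LieTwiceDifferentiableAt F p) (hG : LieTwiceDifferentiableAt G p)
    (H : Matrix (Fin n) (Fin n) ℂ → ℂ) :
    kappaU n (fun w => F w - G w) H p = kappaU n F H p - kappaU n G H p := by
  simp only [kappaU_eq_basisSum, lieD1_sub hF hG, sub_mul, basisSum_sub]

theorem kappaU_mul_left (hF : LieTwiceDifferentiableAt F p) (hG : LieTwiceDifferentiableAt G p)
    (H : Matrix (Fin n) (Fin n) ℂ → ℂ) :
    kappaU n (fun w => F w * G w) H p = kappaU n F H p * G p + F p * kappaU n G H p := by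
  have h : (fun Z => lieD1 (fun w => F w * G w) p Z * lieD1 H p Z) = fun Z =>
      G p * (lieD1 F p Z * lieD1 H p Z) + F p * (lieD1 G p Z * lieD1 H p Z) :=
    funext fun Z => by rw [lieD1_mul hF hG]; ring
  rw [kappaU_eq_basisSum, h, basisSum_add, basisSum_const_mul, basisSum_const_mul,
    kappaU_eq_basisSum, kappaU_eq_basisSum]
  ring

theorem kappaU_inv_left (hG : LieTwiceDifferentiableAt G p) (hp : G p ≠ 0)
    (H : Matrix (Fin n) (Fin n) ℂ → ℂ) :
    kappaU n (fun w => (G w)⁻¹) H p = -kappaU n G H p / G p ^ 2 := by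
  have h : (fun Z => lieD1 (fun w => (G w)⁻¹) p Z * lieD1 H p Z) = fun Z =>
      (-(G p ^ 2)⁻¹) * (lieD1 G p Z * lieD1 H p Z) :=
    funext fun Z => by rw [lieD1_inv hG hp]; ring
  rw [kappaU_eq_basisSum, h, basisSum_const_mul, kappaU_eq_basisSum]
  ring

theorem tauU_div (hF : LieTwiceDifferentiableAt F p) (hG : LieTwiceDifferentiableAt G p)
    (hp : G p ≠ 0) :
    tauU n (fun w => F w / G w) p =
      tauU n F p / G p - 2 * kappaU n F G p / G p ^ 2 - F p * tauU n G p / G p ^ 2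
        + 2 * F p * kappaU n G G p / G p ^ 3 := by
  have h : (fun w => F w / G w) = fun w => F w * (G w)⁻¹ := funext fun w => div_eq_mul_inv _ _
  simp only [h, tauU_mul hF (hG.inv hp), tauU_inv hG hp, kappaU_comm F,
    kappaU_inv_left hG hp]
  field_simp
  ring

end TensionCalculus

section LinearForms

variable {n : ℕ}

theorem tauU_linearMap (ℓ : Matrix (Fin n) (Fin n) ℂ →ₗ[ℂ] ℂ) (p : Matrix (Fin n) (Fin n) ℂ) :
    tauU n ℓ p = -n * ℓ p := by
  have h := basisSum_bilinear ((LinearMap.mul ℂ _).compr₂ (ℓ ∘ₗ LinearMap.mulLeft ℂ p))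
  simp only [LinearMap.compr₂_apply, LinearMap.mul_apply', LinearMap.comp_apply,
    LinearMap.mulLeft_apply, matE, Matrix.single_mul_single_same, mul_one, Finset.sum_const,
    Finset.card_univ, Fintype.card_fin, nsmul_eq_mul, ← map_sum, ← Finset.mul_sum,
    Matrix.sum_single_one] at h
  rw [tauU_eq_basisSum, funext (lieD2_linearMap ℓ p), neg_mul]
  simpa only [mul_assoc] using h

theorem kappaU_linearMap (ℓ ℓ' : Matrix (Fin n) (Fin n) ℂ →ₗ[ℂ] ℂ)
    (p : Matrix (Fin n) (Fin n) ℂ) :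
    kappaU n ℓ ℓ' p = -∑ r, ∑ s, ℓ (p * matE n r s) * ℓ' (p * matE n s r) := by
  rw [kappaU_eq_basisSum]
  simp only [lieD1_linearMap]
  exact basisSum_bilinear
    ((LinearMap.mul ℂ ℂ).compl₁₂ (ℓ ∘ₗ LinearMap.mulLeft ℂ p) (ℓ' ∘ₗ LinearMap.mulLeft ℂ p))

def colForm (u : Fin n → ℂ) (γ : Fin n) : Matrix (Fin n) (Fin n) ℂ →ₗ[ℂ] ℂ where
  toFun w := ∑ j, u j * w j γ
  map_add' v w := by simp [mul_add, Finset.sum_add_distrib]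
  map_smul' c w := by simp [Finset.mul_sum, mul_left_comm]

theorem colForm_apply (u : Fin n → ℂ) (γ : Fin n) (w : Matrix (Fin n) (Fin n) ℂ) :
    colForm u γ w = ∑ j, u j * w j γ := rfl

theorem colForm_mul_matE (u : Fin n → ℂ) (γ r s : Fin n) (p : Matrix (Fin n) (Fin n) ℂ) :
    colForm u γ (p * matE n r s) = if s = γ then colForm u r p else 0 := by
  by_cases h : s = γ
  · subst h; simp [colForm_apply, matE]
  · simp [colForm_apply, matE, h, Ne.symm h]

theorem kappaU_colForm (u v : Fin n → ℂ) (γ δ : Fin n) (p : Matrix (Fin n) (Fin n) ℂ) :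
    kappaU n (colForm u γ) (colForm v δ) p = -(colForm u δ p * colForm v γ p) := by
  simp [kappaU_linearMap, colForm_mul_matE, ite_mul, mul_ite]

theorem tauU_colForm (u : Fin n → ℂ) (γ : Fin n) (p : Matrix (Fin n) (Fin n) ℂ) :
    tauU n (colForm u γ) p = -n * colForm u γ p :=
  tauU_linearMap _ p

end LinearForms

section Quotient

variable {n : ℕ} (u v : Fin n → ℂ) (γ δ : Fin n)

def colMinor (w : Matrix (Fin n) (Fin n) ℂ) : ℂ :=
  colForm u δ w * colForm v γ w - colForm u γ w * colForm v δ w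

theorem lieTwiceDifferentiableAt_colMinor (p : Matrix (Fin n) (Fin n) ℂ) :
    LieTwiceDifferentiableAt (colMinor u v γ δ) p :=
  ((lieTwiceDifferentiableAt_linearMap _ p).mul (lieTwiceDifferentiableAt_linearMap _ p)).sub
    ((lieTwiceDifferentiableAt_linearMap _ p).mul (lieTwiceDifferentiableAt_linearMap _ p))

theorem colMinor_self : colMinor u v γ γ = 0 := by
  ext w
  simp only [colMinor, Pi.zero_apply]
  ring

theorem tauU_colForm_div {p : Matrix (Fin n) (Fin n) ℂ} (hp : colForm v δ p ≠ 0) :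
    tauU n (fun w => colForm u γ w / colForm v δ w) p =
      2 * colMinor u v γ δ p / colForm v δ p ^ 2 := by
  rw [tauU_div (lieTwiceDifferentiableAt_linearMap _ p) (lieTwiceDifferentiableAt_linearMap _ p) hp,
    tauU_colForm, tauU_colForm, kappaU_colForm, kappaU_colForm, colMinor]
  field_simp
  ring

theorem tauU_colMinor (p : Matrix (Fin n) (Fin n) ℂ) :
    tauU n (colMinor u v γ δ) p = -2 * (n - 1) * colMinor u v γ δ p := by
  have hL := fun (a : Fin n → ℂ) (ε : Fin n) => lieTwiceDifferentiableAt_linearMap (colForm a ε) p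
  unfold colMinor
  rw [tauU_sub ((hL _ _).mul (hL _ _)) ((hL _ _).mul (hL _ _)),
    tauU_mul (hL _ _) (hL _ _), tauU_mul (hL _ _) (hL _ _)]
  simp only [tauU_colForm, kappaU_colForm]
  ring

theorem kappaU_colMinor_colForm (p : Matrix (Fin n) (Fin n) ℂ) :
    kappaU n (colMinor u v γ δ) (colForm v δ) p = -(colForm v δ p * colMinor u v γ δ p) := by
  have hL := fun (a : Fin n → ℂ) (ε : Fin n) => lieTwiceDifferentiableAt_linearMap (colForm a ε) p
  unfold colMinor
  rw [kappaU_sub_left ((hL _ _).mul (hL _ _)) ((hL _ _).mul (hL _ _)),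
    kappaU_mul_left (hL _ _) (hL _ _), kappaU_mul_left (hL _ _) (hL _ _)]
  simp only [kappaU_colForm]
  ring

theorem tauU_colMinor_div_sq {p : Matrix (Fin n) (Fin n) ℂ} (hp : colForm v δ p ≠ 0) :
    tauU n (fun w => colMinor u v γ δ w / colForm v δ w ^ 2) p = 0 := by
  set Q := colForm v δ
  have hQ : LieTwiceDifferentiableAt Q p := lieTwiceDifferentiableAt_linearMap _ p
  have hτQQ : tauU n (fun w => Q w * Q w) p = -2 * (n + 1) * Q p ^ 2 := by
    rw [tauU_mul hQ hQ, tauU_colForm, kappaU_colForm]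
    ring
  have hκQQ : kappaU n (fun w => Q w * Q w) (fun w => Q w * Q w) p = -4 * Q p ^ 4 := by
    rw [kappaU_mul_left hQ hQ, kappaU_comm Q, kappaU_mul_left hQ hQ, kappaU_colForm]
    ring
  have hκNQQ : kappaU n (colMinor u v γ δ) (fun w => Q w * Q w) p =
      -2 * Q p ^ 2 * colMinor u v γ δ p := by
    rw [kappaU_comm, kappaU_mul_left hQ hQ, kappaU_comm Q, kappaU_colMinor_colForm]
    ring
  simp only [sq]
  rw [tauU_div (lieTwiceDifferentiableAt_colMinor u v γ δ p) (hQ.mul hQ) (mul_ne_zero hp hp),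
    hτQQ, hκQQ, hκNQQ, tauU_colMinor]
  field_simp
  ring

theorem tauU_tauU_colForm_div {p : Matrix (Fin n) (Fin n) ℂ} (hp : colForm v δ p ≠ 0) :
    tauU n (tauU n (fun w => colForm u γ w / colForm v δ w)) p = 0 := by
  have hloc : tauU n (fun w => colForm u γ w / colForm v δ w) =ᶠ[𝓝 p]
      fun w => 2 * (colMinor u v γ δ w / colForm v δ w ^ 2) := by
    filter_upwards [(LinearMap.continuous_of_finiteDimensional _).continuousAt.eventually_ne hp]
      with w hw
    rw [tauU_colForm_div u v γ δ hw, mul_div_assoc]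
  rw [hloc.tauU_eq, tauU_const_mul, tauU_colMinor_div_sq u v γ δ hp, mul_zero]

end Quotient

theorem colForm_permMatrix {n : ℕ} (u : Fin n → ℂ) (γ : Fin n) (σ : Equiv.Perm (Fin n)) :
    colForm u γ (σ.permMatrix ℂ) = u (σ.symm γ) := by
  simp [colForm_apply, PEquiv.toMatrix_apply, ← Equiv.eq_symm_apply]

theorem LinearIndependent.exists_ne_zero_and_cross_ne_zero {n : ℕ} {p q : Fin n → ℂ}
    (hpq : LinearIndependent ℂ ![p, q]) : ∃ j k, q k ≠ 0 ∧ p k * q j - p j * q k ≠ 0 := by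
  obtain ⟨k, hk⟩ := Function.ne_iff.mp (hpq.ne_zero 1)
  suffices ∃ j, p k * q j - p j * q k ≠ 0 from
    let ⟨j, hj⟩ := this; ⟨j, k, hk, hj⟩
  by_contra! h
  have hcomb : q k • p + (-p k) • q = 0 := funext fun j => by
    simp only [Pi.add_apply, Pi.smul_apply, smul_eq_mul, Pi.zero_apply]
    linear_combination -h j
  exact hk (LinearIndependent.pair_iff.mp hpq _ _ hcomb).1

theorem exists_mem_unitaryGroup_colForm_ne_zero_colMinor_ne_zero {n : ℕ} {p q : Fin n → ℂ}
    (hpq : LinearIndependent ℂ ![p, q]) {α β : Fin n} (hαβ : α ≠ β) :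
    ∃ z ∈ Matrix.unitaryGroup (Fin n) ℂ, colForm q β z ≠ 0 ∧ colMinor p q α β z ≠ 0 := by
  obtain ⟨j, k, hk, hjk⟩ := hpq.exists_ne_zero_and_cross_ne_zero
  have hjk' : j ≠ k := by rintro rfl; exact hjk (sub_self _)
  obtain ⟨σ, hσα, hσβ⟩ := Equiv.Perm.exists_apply_eq_pair hαβ hjk'
  refine ⟨(σ⁻¹).permMatrix ℂ, Matrix.permMatrix_mem_unitaryGroup _, ?_, ?_⟩
  · simpa [colForm_permMatrix, Equiv.Perm.inv_def, hσβ] using hk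
  · simpa [colMinor, colForm_permMatrix, Equiv.Perm.inv_def, hσα, hσβ] using hjk

theorem proper_biharmonic_quotient_linear_unitary_general (n : ℕ) (α β : Fin n)
    (p q : Fin n → ℂ) (hpq : LinearIndependent ℂ ![p, q]) :
    ((∀ z : Matrix (Fin n) (Fin n) ℂ, z ∈ Matrix.unitaryGroup (Fin n) ℂ →
        (∑ k, q k * z k β) ≠ 0 →
        tauU n (tauU n (fun w => (∑ j, p j * w j α) / (∑ k, q k * w k β))) z = 0)
      ∧ ¬ (∀ z : Matrix (Fin n) (Fin n) ℂ, z ∈ Matrix.unitaryGroup (Fin n) ℂ →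
        (∑ k, q k * z k β) ≠ 0 →
        tauU n (fun w => (∑ j, p j * w j α) / (∑ k, q k * w k β)) z = 0))
      ↔ α ≠ β := by
  simp only [← colForm_apply]
  refine ⟨fun ⟨_, hτ⟩ hαβ => hτ fun z _ hz => ?_,
    fun hαβ => ⟨fun z _ hz => tauU_tauU_colForm_div p q α β hz, fun hτ => ?_⟩⟩
  · subst hαβ
    rw [tauU_colForm_div p q α α hz, colMinor_self, Pi.zero_apply, mul_zero, zero_div]
  · obtain ⟨z, hzU, hQ, hN⟩ := exists_mem_unitaryGroup_colForm_ne_zero_colMinor_ne_zero hpq hαβ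
    have h := hτ z hzU hQ
    rw [tauU_colForm_div p q α β hQ] at h
    simp [hQ, hN] at h

/-- with `P(z) = Σ_j p_j z_{jα}` and `Q(z) = Σ_k q_k z_{kβ}` for linearly
independent `p, q ∈ ℂⁿ`, the quotient `f = P/Q` is proper biharmonic on
`W_Q = {z ∈ U(n) : Q(z) ≠ 0}` (i.e. `τ²(f) = 0` on `W_Q` while `τ(f)` does not vanish
identically on `W_Q`) if and only if `α ≠ β`. -/
theorem proper_biharmonic_quotient_linear_unitary (n : ℕ) (hn : 1 ≤ n) (α β : Fin n)
    (p q : Fin n → ℂ) (hpq : LinearIndependent ℂ ![p, q]) :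
    ((∀ z : Matrix (Fin n) (Fin n) ℂ, z ∈ Matrix.unitaryGroup (Fin n) ℂ →
        (∑ k, q k * z k β) ≠ 0 →
        tauU n (tauU n (fun w => (∑ j, p j * w j α) / (∑ k, q k * w k β))) z = 0)
      ∧ ¬ (∀ z : Matrix (Fin n) (Fin n) ℂ, z ∈ Matrix.unitaryGroup (Fin n) ℂ →
        (∑ k, q k * z k β) ≠ 0 →
        tauU n (fun w => (∑ j, p j * w j α) / (∑ k, q k * w k β)) z = 0))
      ↔ α ≠ β :=
  proper_biharmonic_quotient_linear_unitary_general n α β p q hpq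

end
end

section
/- Let n ≥ 1 be an integer and f_n : ℂ∖{0} → ℂ be defined by f_n(z) = (z/conj(z))ⁿ. Then for a positive integer r, the function f_n is proper r-harmonic (i.e. Δʳ f_n = 0 identically on ℂ∖{0} and Δ^{r−1} f_n does not vanish identically) if and only if r = n + 1. -/
/-!
In the Wirtinger form `Δ = 4 ∂ ∂̄`, the Laplacian sends `z ^ a * conj z ^ b` to
`4 a b z ^ (a - 1) * conj z ^ (b - 1)` on `ℂ∖{0}`, for all integers `a`, `b`. Since
`(z / conj z) ^ n = z ^ n * conj z ^ (-n)`, the iterate `Δ^k` of it is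
`∏_{j<k} 4 (n - j) (-n - j)` times a monomial that does not vanish on `ℂ∖{0}`, and this
coefficient is zero exactly when `k > n`.
-/

noncomputable section

/-- The Euclidean Laplacian on `ℂ ≅ ℝ²`:
`Δf(z) = ∂²f/∂x²(z) + ∂²f/∂y²(z)`, where the second partials are computed as second
derivatives along the coordinate directions. -/
def lapC (f : ℂ → ℂ) (z : ℂ) : ℂ :=
  deriv (deriv (fun t : ℝ => f (z + (t : ℂ)))) 0
    + deriv (deriv (fun t : ℝ => f (z + (t : ℂ) * Complex.I))) 0

/-- The iterated Laplacian: `Δ⁰f = f`, `Δʳf = Δ(Δ^{r−1}f)`. -/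
def lapIter : ℕ → (ℂ → ℂ) → (ℂ → ℂ)
  | 0, f => f
  | r + 1, f => lapC (lapIter r f)

open Complex ComplexConjugate Filter Topology Finset

section Line

variable (z q d e : ℂ)

theorem hasDerivAt_line_zpow (a : ℤ) {t : ℝ} (h : z + t * d ≠ 0) :
    HasDerivAt (fun s : ℝ => (z + s * d) ^ a) (a * d * (z + t * d) ^ (a - 1)) t := by
  have hline : HasDerivAt (fun s : ℝ => z + s * d) d t := by
    simpa using ((hasDerivAt_id t).ofReal_comp.mul_const d).const_add z
  refine ((hasDerivAt_zpow a _ (Or.inl h)).comp t hline).congr_deriv ?_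
  ring

theorem hasDerivAt_line_zpow_mul_zpow (a b : ℤ) {t : ℝ} (hz : z + t * d ≠ 0)
    (hq : q + t * e ≠ 0) :
    HasDerivAt (fun s : ℝ => (z + s * d) ^ a * (q + s * e) ^ b)
      (a * d * ((z + t * d) ^ (a - 1) * (q + t * e) ^ b)
        + b * e * ((z + t * d) ^ a * (q + t * e) ^ (b - 1))) t := by
  refine ((hasDerivAt_line_zpow z d a hz).mul (hasDerivAt_line_zpow q e b hq)).congr_deriv ?_
  ring

theorem deriv_deriv_line_zpow_mul_zpow (a b : ℤ) (hz : z ≠ 0) (hq : q ≠ 0) :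
    deriv (deriv fun s : ℝ => (z + s * d) ^ a * (q + s * e) ^ b) 0
      = a * (a - 1) * d ^ 2 * (z ^ (a - 2) * q ^ b)
        + 2 * a * b * d * e * (z ^ (a - 1) * q ^ (b - 1))
        + b * (b - 1) * e ^ 2 * (z ^ a * q ^ (b - 2)) := by
  have hne : ∀ᶠ s : ℝ in 𝓝 0, z + s * d ≠ 0 ∧ q + s * e ≠ 0 :=
    ((by fun_prop : Continuous fun s : ℝ => z + s * d).continuousAt.eventually_ne (by simpa)).and
      ((by fun_prop : Continuous fun s : ℝ => q + s * e).continuousAt.eventually_ne (by simpa))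
  have hderiv := hne.mono fun s hs =>
    (hasDerivAt_line_zpow_mul_zpow z q d e a b hs.1 hs.2).deriv
  rw [EventuallyEq.deriv_eq hderiv]
  have h0 : z + ((0 : ℝ) : ℂ) * d ≠ 0 := by simpa using hz
  have h0' : q + ((0 : ℝ) : ℂ) * e ≠ 0 := by simpa using hq
  have hsecond :=
    ((hasDerivAt_line_zpow_mul_zpow z q d e (a - 1) b h0 h0').const_mul ((a : ℂ) * d)).add
      ((hasDerivAt_line_zpow_mul_zpow z q d e a (b - 1) h0 h0').const_mul ((b : ℂ) * e))
  refine hsecond.deriv.trans ?_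
  simp only [ofReal_zero, zero_mul, add_zero]
  push_cast
  ring_nf

end Line

theorem lapC_const_mul (c : ℂ) (f : ℂ → ℂ) (z : ℂ) :
    lapC (fun w => c * f w) z = c * lapC f z := by
  simp only [lapC, deriv_const_mul_field']
  ring

theorem lapC_congr {f g : ℂ → ℂ} {z : ℂ} (h : f =ᶠ[𝓝 z] g) : lapC f z = lapC g z := by
  have hline : ∀ d : ℂ, (fun t : ℝ => f (z + t * d)) =ᶠ[𝓝 0] fun t : ℝ => g (z + t * d) := by
    intro d
    refine ((by fun_prop : Continuous fun t : ℝ => z + t * d).tendsto' 0 z ?_).eventually h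
    simp
  simpa [lapC] using congrArg₂ (· + ·) (hline 1).deriv.deriv_eq (hline I).deriv.deriv_eq

theorem lapC_zpow_mul_conj_zpow (a b : ℤ) {z : ℂ} (hz : z ≠ 0) :
    lapC (fun w => w ^ a * conj w ^ b) z = 4 * a * b * (z ^ (a - 1) * conj z ^ (b - 1)) := by
  have hline : ∀ d : ℂ, (fun t : ℝ => (z + t * d) ^ a * conj (z + t * d) ^ b)
      = fun t : ℝ => (z + t * d) ^ a * (conj z + t * conj d) ^ b := by
    intro d
    simp only [map_add, map_mul, conj_ofReal]
  have hz' : conj z ≠ 0 := (map_ne_zero _).mpr hz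
  have hreal : (fun t : ℝ => (z + t) ^ a * conj (z + t) ^ b)
      = fun t : ℝ => (z + t * 1) ^ a * conj (z + t * 1) ^ b := by
    simp only [mul_one]
  simp only [lapC]
  -- The terms with `d ^ 2` and `conj d ^ 2` cancel between the directions `d = 1` and `d = I`.
  rw [hreal, hline 1, hline I, deriv_deriv_line_zpow_mul_zpow _ _ _ _ _ _ hz hz',
    deriv_deriv_line_zpow_mul_zpow _ _ _ _ _ _ hz hz']
  simp only [map_one, conj_I]
  linear_combination (a * (a - 1) * z ^ (a - 2) * conj z ^ b
    - 2 * a * b * z ^ (a - 1) * conj z ^ (b - 1) + b * (b - 1) * z ^ a * conj z ^ (b - 2)) * I_sq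

theorem lapIter_zpow_mul_conj_zpow (a b : ℤ) (k : ℕ) {z : ℂ} (hz : z ≠ 0) :
    lapIter k (fun w => w ^ a * conj w ^ b) z
      = (∏ j ∈ range k, 4 * ((a : ℂ) - j) * ((b : ℂ) - j)) * (z ^ (a - k) * conj z ^ (b - k)) := by
  induction k generalizing z with
  | zero => simp [lapIter]
  | succ k ih =>
    have hloc : lapIter k (fun w => w ^ a * conj w ^ b) =ᶠ[𝓝 z]
        fun w => (∏ j ∈ range k, 4 * ((a : ℂ) - j) * ((b : ℂ) - j))
          * (w ^ (a - k) * conj w ^ (b - k)) :=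
      (eventually_ne_nhds hz).mono fun w hw => ih hw
    rw [lapIter, lapC_congr hloc, lapC_const_mul, lapC_zpow_mul_conj_zpow _ _ hz, prod_range_succ]
    push_cast [sub_sub]
    ring

theorem z_div_conj_pow_eq (n : ℕ) :
    (fun w : ℂ => (w / conj w) ^ n) = fun w => w ^ (n : ℤ) * conj w ^ (-(n : ℤ)) := by
  funext w
  rw [div_pow, zpow_neg, zpow_natCast, zpow_natCast, div_eq_mul_inv]

theorem z_div_conj_pow_coeff_eq_zero_iff (n j : ℕ) :
    4 * ((n : ℂ) - j) * (-(n : ℂ) - j) = 0 ↔ j = n := by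
  have hsum : -(n : ℂ) - j = -((n + j : ℕ) : ℂ) := by push_cast; ring
  have h4 : (4 : ℂ) ≠ 0 := by norm_num
  simp only [hsum, mul_eq_zero, h4, false_or, sub_eq_zero, neg_eq_zero, Nat.cast_eq_zero,
    Nat.cast_inj]
  omega

theorem lapIter_z_div_conj_pow_eq_zero_iff (n k : ℕ) :
    (∀ z : ℂ, z ≠ 0 → lapIter k (fun w => (w / starRingEnd ℂ w) ^ n) z = 0) ↔ n < k := by
  have hcoeff :
      ∏ j ∈ range k, 4 * (((n : ℤ) : ℂ) - j) * (((-(n : ℤ) : ℤ) : ℂ) - j) = 0 ↔ n < k := by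
    simp only [Int.cast_natCast, Int.cast_neg, prod_eq_zero_iff, mem_range,
      z_div_conj_pow_coeff_eq_zero_iff, exists_eq_right]
  rw [← hcoeff, z_div_conj_pow_eq]
  constructor
  · intro h
    have h1 := h 1 one_ne_zero
    rwa [lapIter_zpow_mul_conj_zpow _ _ _ one_ne_zero, map_one, one_zpow, one_zpow, mul_one,
      mul_one] at h1
  · intro h z hz
    rw [lapIter_zpow_mul_conj_zpow _ _ _ hz, h, zero_mul]

theorem proper_r_harmonic_z_div_conj_pow_general (n : ℕ) (r : ℕ) :
    ((∀ z : ℂ, z ≠ 0 → lapIter r (fun w => (w / starRingEnd ℂ w) ^ n) z = 0)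
      ∧ ¬ (∀ z : ℂ, z ≠ 0 → lapIter (r - 1) (fun w => (w / starRingEnd ℂ w) ^ n) z = 0))
      ↔ r = n + 1 := by
  rw [lapIter_z_div_conj_pow_eq_zero_iff, lapIter_z_div_conj_pow_eq_zero_iff]
  omega

/-- for `f_n(z) = (z/conj z)ⁿ` and a positive integer `r`, the function
`f_n` is proper `r`-harmonic on `ℂ∖{0}` (i.e. `Δʳf_n = 0` identically and `Δ^{r−1}f_n`
does not vanish identically) if and only if `r = n + 1`. -/
theorem proper_r_harmonic_z_div_conj_pow (n : ℕ) (hn : 1 ≤ n) (r : ℕ) (hr : 1 ≤ r) :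
    ((∀ z : ℂ, z ≠ 0 → lapIter r (fun w => (w / starRingEnd ℂ w) ^ n) z = 0)
      ∧ ¬ (∀ z : ℂ, z ≠ 0 → lapIter (r - 1) (fun w => (w / starRingEnd ℂ w) ^ n) z = 0))
      ↔ r = n + 1 :=
  proper_r_harmonic_z_div_conj_pow_general n r

end
end
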